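/- Let 1 < p ≤ 2. There exist constants 0 < c ≤ C, depending only on p, such that for every dimension d ≥ 1, every pair of relaxation parameters 0 < ε₋ ≤ ε₊ < ∞, and all vectors P, Q ∈ ℝ^d one has c · clamp(max(|P|,|Q|))^{p-2} · |P − Q|² ≤ (A_ε(P) − A_ε(Q)) · (P − Q) ≤ C · clamp(max(|P|,|Q|))^{p-2} · |P − Q|², where · on the middle expression denotes the Euclidean inner product. -/

import Mathlib

/-!
Write `w(t) = clamp(t)^(p-2)` and assume `|Q| ≤ |P|`. Then
`⟪A_ε(P) - A_ε(Q), P - Q⟫ = w(|P|) |P - Q|² + (w(|P|) - w(|Q|)) ⟪Q, P - Q⟫`,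
so both bounds follow once the cross term is at most `(2 - p) w(|P|) |P - Q|²`. By Cauchy–Schwarz
and `|P| - |Q| ≤ |P - Q|` this reduces to the scalar estimate
`(w(s) - w(t)) s ≤ (2 - p) w(t) (t - s)` for `s ≤ t`, which is the tangent-line inequality for
the concave function `u ↦ u^(p-1)` at `clamp(t)`, since `clamp` is `1`-Lipschitz and `s ≤ clamp(s)`
whenever the upper clamp is inactive.
-/

open Real

lemma Real.rpow_le_rpow_add_mul_sub {r u v : ℝ} (hr0 : 0 ≤ r) (hr1 : r ≤ 1) (hu : 0 ≤ u)
    (hv : 0 < v) : u ^ r ≤ v ^ r + r * v ^ (r - 1) * (u - v) := by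
  have bernoulli := rpow_one_add_le_one_add_mul_self (s := u / v - 1)
    (by linarith [div_nonneg hu hv.le]) hr0 hr1
  rw [add_sub_cancel, div_rpow hu hv.le, div_le_iff₀ (rpow_pos_of_pos hv r)] at bernoulli
  calc u ^ r ≤ (1 + r * (u / v - 1)) * v ^ r := bernoulli
    _ = v ^ r + r * v ^ (r - 1) * (u - v) := by
      rw [rpow_sub_one hv.ne']; field_simp

lemma Real.rpow_sub_rpow_mul_le {p u v : ℝ} (hp1 : 1 ≤ p) (hp2 : p ≤ 2) (hu : 0 < u) (hv : 0 < v) :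
    (u ^ (p - 2) - v ^ (p - 2)) * u ≤ (2 - p) * v ^ (p - 2) * (v - u) := by
  have tangent := rpow_le_rpow_add_mul_sub (r := p - 1) (by linarith) (by linarith) hu.le hv
  rw [show p - 1 - 1 = p - 2 by ring] at tangent
  have hu' : u ^ (p - 2) * u = u ^ (p - 1) := by
    rw [← rpow_add_one hu.ne']; ring_nf
  have hv' : v ^ (p - 2) * v = v ^ (p - 1) := by
    rw [← rpow_add_one hv.ne']; ring_nf
  linear_combination tangent + hu' - hv'

lemma max_min_sub_max_min_le {εm εp s t : ℝ} (hst : s ≤ t) :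
    max εm (min t εp) - max εm (min s εp) ≤ t - s := by
  simp only [max_def, min_def]
  split_ifs <;> linarith

lemma inner_smul_sub_smul_bounds {E : Type*} [NormedAddCommGroup E] [InnerProductSpace ℝ E]
    {a b κ : ℝ} {P Q : E} (ha : 0 ≤ a) (hκ : 0 ≤ κ)
    (hab : |a - b| * ‖Q‖ ≤ κ * a * (‖P‖ - ‖Q‖)) :
    (1 - κ) * a * ‖P - Q‖ ^ 2 ≤ inner ℝ (a • P - b • Q) (P - Q) ∧
      inner ℝ (a • P - b • Q) (P - Q) ≤ (1 + κ) * a * ‖P - Q‖ ^ 2 := by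
  have expand :
      inner ℝ (a • P - b • Q) (P - Q) = a * ‖P - Q‖ ^ 2 + (a - b) * inner ℝ Q (P - Q) := by
    rw [show a • P - b • Q = a • (P - Q) + (a - b) • Q by rw [smul_sub, sub_smul]; abel,
      inner_add_left, real_inner_smul_left, real_inner_smul_left, real_inner_self_eq_norm_sq]
  have cross : |(a - b) * inner ℝ Q (P - Q)| ≤ κ * a * ‖P - Q‖ ^ 2 :=
    calc |(a - b) * inner ℝ Q (P - Q)| ≤ |a - b| * ‖Q‖ * ‖P - Q‖ := by
          rw [abs_mul, mul_assoc]
          exact mul_le_mul_of_nonneg_left (abs_real_inner_le_norm Q (P - Q)) (abs_nonneg _)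
      _ ≤ κ * a * (‖P‖ - ‖Q‖) * ‖P - Q‖ := mul_le_mul_of_nonneg_right hab (norm_nonneg _)
      _ ≤ κ * a * ‖P - Q‖ * ‖P - Q‖ := by
          gcongr
          exact norm_sub_norm_le P Q
      _ = κ * a * ‖P - Q‖ ^ 2 := by ring
  rw [expand]
  constructor <;> linarith [abs_le.mp cross]

/-- In the paper's notation, `A_ε(P) = relaxedWeight p εm εp ‖P‖ • P`. -/
noncomputable def relaxedWeight (p εm εp t : ℝ) : ℝ := max εm (min t εp) ^ (p - 2)

section relaxedWeight

variable {p εm εp : ℝ}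

lemma relaxedWeight_pos (hεm : 0 < εm) (t : ℝ) : 0 < relaxedWeight p εm εp t :=
  rpow_pos_of_pos (hεm.trans_le (le_max_left _ _)) _

lemma relaxedWeight_antitone (hp2 : p ≤ 2) (hεm : 0 < εm) :
    Antitone (relaxedWeight p εm εp) := fun _ _ hst =>
  rpow_le_rpow_of_nonpos (hεm.trans_le (le_max_left _ _))
    (max_le_max le_rfl (min_le_min_right εp hst)) (by linarith)

lemma abs_relaxedWeight_sub_mul_le (hp1 : 1 ≤ p) (hp2 : p ≤ 2) (hεm : 0 < εm) {s t : ℝ}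
    (hst : s ≤ t) :
    |relaxedWeight p εm εp t - relaxedWeight p εm εp s| * s
      ≤ (2 - p) * relaxedWeight p εm εp t * (t - s) := by
  have hwt := relaxedWeight_pos (p := p) (εp := εp) hεm t
  rw [abs_of_nonpos (sub_nonpos.mpr (relaxedWeight_antitone hp2 hεm hst)), neg_sub]
  rcases le_or_gt εp s with hsp | hsp
  · have : relaxedWeight p εm εp s = relaxedWeight p εm εp t := by
      simp only [relaxedWeight, min_eq_right hsp, min_eq_right (hsp.trans hst)]
    rw [this, sub_self, zero_mul]
    exact mul_nonneg (mul_nonneg (by linarith) hwt.le) (by linarith)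
  · set u := max εm (min s εp)
    set v := max εm (min t εp)
    have hu : 0 < u := hεm.trans_le (le_max_left _ _)
    -- below the upper threshold the clamp can only raise `s`
    have hsu : s ≤ u := (min_eq_left hsp.le).ge.trans (le_max_right _ _)
    calc (u ^ (p - 2) - v ^ (p - 2)) * s ≤ (u ^ (p - 2) - v ^ (p - 2)) * u :=
          mul_le_mul_of_nonneg_left hsu
            (sub_nonneg.mpr (relaxedWeight_antitone hp2 hεm hst))
      _ ≤ (2 - p) * v ^ (p - 2) * (v - u) :=
          rpow_sub_rpow_mul_le hp1 hp2 hu (hεm.trans_le (le_max_left _ _))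
      _ ≤ (2 - p) * v ^ (p - 2) * (t - s) :=
          mul_le_mul_of_nonneg_left (max_min_sub_max_min_le hst) (mul_nonneg (by linarith) hwt.le)

lemma inner_relaxedWeight_smul_sub_bounds_of_norm_le (hp1 : 1 ≤ p) (hp2 : p ≤ 2) (hεm : 0 < εm)
    {E : Type*} [NormedAddCommGroup E] [InnerProductSpace ℝ E] {P Q : E} (hQP : ‖Q‖ ≤ ‖P‖) :
    (p - 1) * relaxedWeight p εm εp ‖P‖ * ‖P - Q‖ ^ 2
        ≤ inner ℝ (relaxedWeight p εm εp ‖P‖ • P - relaxedWeight p εm εp ‖Q‖ • Q) (P - Q) ∧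
      inner ℝ (relaxedWeight p εm εp ‖P‖ • P - relaxedWeight p εm εp ‖Q‖ • Q) (P - Q)
        ≤ (3 - p) * relaxedWeight p εm εp ‖P‖ * ‖P - Q‖ ^ 2 := by
  have bounds := inner_smul_sub_smul_bounds (relaxedWeight_pos hεm ‖P‖).le
    (by linarith : 0 ≤ 2 - p) (abs_relaxedWeight_sub_mul_le (εp := εp) hp1 hp2 hεm hQP)
  rwa [show 1 - (2 - p) = p - 1 by ring, show 1 + (2 - p) = 3 - p by ring] at bounds

end relaxedWeight

theorem stmt_0 (p : ℝ) (hp1 : 1 < p) (hp2 : p ≤ 2) :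
    ∃ c C : ℝ, 0 < c ∧ c ≤ C ∧
      ∀ (d : ℕ), 1 ≤ d →
      ∀ εm εp : ℝ, 0 < εm → εm ≤ εp →
      ∀ P Q : EuclideanSpace ℝ (Fin d),
        c * (max εm (min (max ‖P‖ ‖Q‖) εp)) ^ (p - 2) * ‖P - Q‖ ^ 2
            ≤ (inner ℝ ((max εm (min ‖P‖ εp)) ^ (p - 2) • P
                - (max εm (min ‖Q‖ εp)) ^ (p - 2) • Q) (P - Q) : ℝ) ∧
        (inner ℝ ((max εm (min ‖P‖ εp)) ^ (p - 2) • P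
            - (max εm (min ‖Q‖ εp)) ^ (p - 2) • Q) (P - Q) : ℝ)
          ≤ C * (max εm (min (max ‖P‖ ‖Q‖) εp)) ^ (p - 2) * ‖P - Q‖ ^ 2 := by
  refine ⟨p - 1, 3 - p, by linarith, by linarith, fun d _ εm εp hεm _ P Q => ?_⟩
  rcases le_total ‖Q‖ ‖P‖ with hQP | hPQ
  · rw [max_eq_left hQP]
    exact inner_relaxedWeight_smul_sub_bounds_of_norm_le hp1.le hp2 hεm hQP
  · rw [max_eq_right hPQ, ← inner_neg_neg, neg_sub, neg_sub, norm_sub_rev P Q]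
    exact inner_relaxedWeight_smul_sub_bounds_of_norm_le hp1.le hp2 hεm hPQ
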